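/- arXiv:1712.04370 — 5 statements merged into one kernel-verified Lean document; each statement's English description precedes it below -/
import Mathlib

section
/- Let k'/k be a finite purely inseparable extension of fields of characteristic p > 0, let λ ∈ ℤ, and set K = k'(λ). Then: (i) for every x ∈ (k')^× one has x^λ ∈ K, so the group (k')^× acts k-linearly on the k-vector space K by x · v = x^λ v; (ii) the only k-subspaces W of K satisfying x^λ·W ⊆ W for all x ∈ (k')^× are {0} and K. In particular, K is an irreducible k-linear representation of the group (k')^× of dimension [k'(λ) : k]. (This realizes the simple module L_C(λ) of Theorem: dim L_C(λ) = [k'(λ):k] for C = R_{k'/k}(G_m), at the level of groups of k-points.) -/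
/-!
The multipliers `y` with `y • W ⊆ W` of a subspace `W` form a subalgebra; in an algebraic
extension the subalgebra generated by the `x ^ λ` is already the field `k'(λ)`, so a subspace
stable under all `x ^ λ` is stable under multiplication by `k'(λ)`. A nonzero `w ∈ W ⊆ k'(λ)`
then gives `k'(λ) = k'(λ) • w ⊆ W`.
-/

namespace Submodule

variable {R A : Type*} [CommSemiring R] [Semiring A] [Algebra R A]

def mulStabilizer (W : Submodule R A) : Subalgebra R A where
  carrier := {y | ∀ w ∈ W, y * w ∈ W}
  mul_mem' {a b} ha hb w hw := mul_assoc a b w ▸ ha _ (hb w hw)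
  add_mem' {a b} ha hb w hw := (add_mul a b w).symm ▸ W.add_mem (ha w hw) (hb w hw)
  algebraMap_mem' r w hw := Algebra.smul_def r w ▸ W.smul_mem r hw

@[simp]
theorem mem_mulStabilizer {W : Submodule R A} {y : A} :
    y ∈ W.mulStabilizer ↔ ∀ w ∈ W, y * w ∈ W :=
  Iff.rfl

end Submodule

namespace IntermediateField

variable {F E : Type*} [Field F] [Field E] [Algebra F E]

theorem adjoin_toSubalgebra_le_mulStabilizer [Algebra.IsAlgebraic F E] {S : Set E}
    {W : Submodule F E} (hS : ∀ s ∈ S, ∀ w ∈ W, s * w ∈ W) :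
    (adjoin F S).toSubalgebra ≤ W.mulStabilizer := by
  rw [adjoin_toSubalgebra_of_isAlgebraic fun x _ => Algebra.IsAlgebraic.isAlgebraic x]
  exact Algebra.adjoin_le hS

theorem coe_eq_of_toSubalgebra_le_mulStabilizer {K : IntermediateField F E}
    {W : Submodule F E} (hWK : ∀ w ∈ W, w ∈ K) (hKW : K.toSubalgebra ≤ W.mulStabilizer)
    (hW : W ≠ ⊥) : (W : Set E) = K := by
  obtain ⟨w, hwW, hw0⟩ := W.exists_mem_ne_zero_of_ne_bot hW
  refine subset_antisymm hWK fun z hz => ?_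
  have hzw : z * w⁻¹ * w ∈ W := hKW (K.mul_mem hz (K.inv_mem (hWK w hwW))) w hwW
  rwa [inv_mul_cancel_right₀ hw0] at hzw

end IntermediateField

theorem stmt_4_general (k k' : Type*) [Field k] [Field k']
    [Algebra k k'] [FiniteDimensional k k']
    (lam : ℤ) (K : IntermediateField k k')
    (hK : K = IntermediateField.adjoin k {y : k' | ∃ x : k', x ≠ 0 ∧ y = x ^ lam}) :
    (∀ x : k', x ≠ 0 → x ^ lam ∈ K) ∧
    (∀ W : Submodule k k', (∀ w ∈ W, w ∈ K) →
      (∀ x : k', x ≠ 0 → ∀ w ∈ W, x ^ lam * w ∈ W) →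
      W = ⊥ ∨ (W : Set k') = (K : Set k')) := by
  subst hK
  refine ⟨fun x hx => IntermediateField.subset_adjoin k _ ⟨x, hx, rfl⟩,
    fun W hWK hWinv => or_iff_not_imp_left.2 fun hW => ?_⟩
  refine IntermediateField.coe_eq_of_toSubalgebra_le_mulStabilizer hWK ?_ hW
  refine IntermediateField.adjoin_toSubalgebra_le_mulStabilizer ?_
  rintro _ ⟨x, hx, rfl⟩
  exact hWinv x hx

/-- Let k'/k be a finite purely inseparable extension of fields of
characteristic p > 0, λ ∈ ℤ and K = k'(λ).  Then (i) x^λ ∈ K for every x ∈ (k')ˣ,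
so (k')ˣ acts k-linearly on K by x · v = x^λ v, and (ii) the only k-subspaces W of K
with x^λ·W ⊆ W for all x ∈ (k')ˣ are {0} and K; so K is an irreducible representation
of (k')ˣ of dimension [k'(λ) : k]. -/
theorem stmt_4 (p : ℕ) [Fact p.Prime] (k k' : Type*) [Field k] [Field k']
    [Algebra k k'] [CharP k p] [IsPurelyInseparable k k'] [FiniteDimensional k k']
    (lam : ℤ) (K : IntermediateField k k')
    (hK : K = IntermediateField.adjoin k {y : k' | ∃ x : k', x ≠ 0 ∧ y = x ^ lam}) :
    (∀ x : k', x ≠ 0 → x ^ lam ∈ K) ∧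
    (∀ W : Submodule k k', (∀ w ∈ W, w ∈ K) →
      (∀ x : k', x ≠ 0 → ∀ w ∈ W, x ^ lam * w ∈ W) →
      W = ⊥ ∨ (W : Set k') = (K : Set k')) :=
  stmt_4_general k k' lam K hK
end

section
/- Let Ω/k be an extension of fields of characteristic p > 0 and let k₁, …, kₙ be intermediate fields of Ω/k, each finite and purely inseparable over k. Fix integers λ₁, …, λₙ and let K be the subfield of Ω generated by k together with the sets {x^{λᵢ} : x ∈ (kᵢ)^×} for 1 ≤ i ≤ n. Then: (i) K is a finite purely inseparable extension of k; (ii) for every tuple (x₁,…,xₙ) ∈ (k₁)^× × ⋯ × (kₙ)^×, the product x₁^{λ₁}⋯xₙ^{λₙ} lies in K, so the group (k₁)^× × ⋯ × (kₙ)^× acts k-linearly on K by (x₁,…,xₙ)·v = (x₁^{λ₁}⋯xₙ^{λₙ})·v; (iii) the only k-subspaces W of K with x₁^{λ₁}⋯xₙ^{λₙ}·W ⊆ W for all such tuples are {0} and K. In particular K is an irreducible representation of the product group of dimension [K : k]. -/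
/-!
Every generator `x ^ λᵢ` lies in `kᵢ`, hence in both the compositum `⨆ i, kᵢ` (finite over `k`)
and the perfect closure of `k` in `Ω`; so does `K`. A generator is the product attached to a
tuple with a single nontrivial entry, so an invariant subspace `W ⊆ K` is stable under
multiplication by the `k`-algebra they generate, which is all of `K` because `K/k` is
algebraic. A `K`-stable subspace of the field `K` containing some `w ≠ 0` contains
`(v / w) * w = v` for every `v ∈ K`.
-/

open IntermediateField

section Stabilizer

variable {k A : Type*} [CommRing k] [Ring A] [Algebra k A]

theorem Submodule.mul_mem_of_mem_algebraAdjoin {S : Set A} {W : Submodule k A}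
    (hS : ∀ a ∈ S, ∀ w ∈ W, a * w ∈ W) {a : A} (ha : a ∈ Algebra.adjoin k S) :
    ∀ w ∈ W, a * w ∈ W := by
  induction ha using Algebra.adjoin_induction with
  | mem x hx => exact hS x hx
  | algebraMap c => exact fun w hw ↦ by rw [← Algebra.smul_def]; exact W.smul_mem c hw
  | add x y _ _ ihx ihy => exact fun w hw ↦ by rw [add_mul]; exact W.add_mem (ihx w hw) (ihy w hw)
  | mul x y _ _ ihx ihy => exact fun w hw ↦ by rw [mul_assoc]; exact ihx _ (ihy w hw)

end Stabilizer

section Field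

variable {k Ω : Type*} [Field k] [Field Ω] [Algebra k Ω]

theorem Submodule.eq_bot_or_eq_of_mul_mem_of_le (K : IntermediateField k Ω) (W : Submodule k Ω)
    (hWK : ∀ w ∈ W, w ∈ K) (hmul : ∀ a ∈ K, ∀ w ∈ W, a * w ∈ W) :
    W = ⊥ ∨ (W : Set Ω) = (K : Set Ω) := by
  by_cases hW : ∀ w ∈ W, w = 0
  · exact .inl ((Submodule.eq_bot_iff W).mpr hW)
  push Not at hW
  obtain ⟨w, hwW, hw0⟩ := hW
  refine .inr (subset_antisymm hWK fun v hv ↦ ?_)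
  have := hmul _ (K.mul_mem hv (K.inv_mem (hWK w hwW))) w hwW
  rwa [mul_assoc, inv_mul_cancel₀ hw0, mul_one] at this

theorem IntermediateField.mul_mem_of_mem_adjoin_of_isAlgebraic {S : Set Ω}
    (hS : ∀ x ∈ S, IsAlgebraic k x) {W : Submodule k Ω} (hSW : ∀ a ∈ S, ∀ w ∈ W, a * w ∈ W)
    {a : Ω} (ha : a ∈ adjoin k S) :
    ∀ w ∈ W, a * w ∈ W := by
  rw [← mem_toSubalgebra, adjoin_toSubalgebra_of_isAlgebraic hS] at ha
  exact Submodule.mul_mem_of_mem_algebraAdjoin hSW ha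

variable {ι : Type*} (F : ι → IntermediateField k Ω) (lam : ι → ℤ)

def zpowGenerators : Set Ω :=
  ⋃ i, {y : Ω | ∃ x : Ω, x ∈ F i ∧ x ≠ 0 ∧ y = x ^ lam i}

variable {F lam}

theorem adjoin_zpowGenerators_le {E : IntermediateField k Ω} (hE : ∀ i, F i ≤ E) :
    adjoin k (zpowGenerators F lam) ≤ E := by
  refine adjoin_le_iff.mpr fun y hy ↦ ?_
  obtain ⟨i, x, hx, -, rfl⟩ := Set.mem_iUnion.mp hy
  exact E.pow_mem (hE i hx) (lam i)

theorem prod_zpow_mulSingle [Fintype ι] [DecidableEq ι] (i : ι) (x : Ω) :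
    ∏ j, Pi.mulSingle i x j ^ lam j = x ^ lam i := by
  rw [Fintype.prod_eq_single i fun j hj ↦ by rw [Pi.mulSingle_eq_of_ne hj, one_zpow],
    Pi.mulSingle_eq_same]

theorem mul_mem_of_mem_zpowGenerators [Fintype ι] [DecidableEq ι] {W : Submodule k Ω}
    (hW : ∀ x : ι → Ω, (∀ i, x i ∈ F i ∧ x i ≠ 0) → ∀ w ∈ W, (∏ i, x i ^ lam i) * w ∈ W) :
    ∀ y ∈ zpowGenerators F lam, ∀ w ∈ W, y * w ∈ W := by
  intro y hy
  obtain ⟨i, x, hx, hx0, rfl⟩ := Set.mem_iUnion.mp hy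
  have hsingle : ∀ j, (Pi.mulSingle i x : ι → Ω) j ∈ F j ∧ (Pi.mulSingle i x : ι → Ω) j ≠ 0 :=
    fun j ↦ by
      by_cases h : j = i
      · subst h; simp [hx, hx0]
      · simp [Pi.mulSingle_eq_of_ne h, one_mem]
  simpa only [prod_zpow_mulSingle] using hW _ hsingle

end Field

theorem stmt_5_general (k Ω : Type*) [Field k] [Field Ω] [Algebra k Ω]
    (n : ℕ) (ki : Fin n → IntermediateField k Ω)
    (hfin : ∀ i, FiniteDimensional k (ki i))
    (hins : ∀ i, IsPurelyInseparable k (ki i))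
    (lam : Fin n → ℤ) (K : IntermediateField k Ω)
    (hK : K = IntermediateField.adjoin k
        (⋃ i, {y : Ω | ∃ x : Ω, x ∈ ki i ∧ x ≠ 0 ∧ y = x ^ lam i})) :
    (FiniteDimensional k K ∧ IsPurelyInseparable k K) ∧
    (∀ x : Fin n → Ω, (∀ i, x i ∈ ki i ∧ x i ≠ 0) → (∏ i, x i ^ lam i) ∈ K) ∧
    (∀ W : Submodule k Ω, (∀ w ∈ W, w ∈ K) →
      (∀ x : Fin n → Ω, (∀ i, x i ∈ ki i ∧ x i ≠ 0) →
        ∀ w ∈ W, (∏ i, x i ^ lam i) * w ∈ W) →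
      W = ⊥ ∨ (W : Set Ω) = (K : Set Ω)) := by
  change K = adjoin k (zpowGenerators ki lam) at hK
  have hgen : zpowGenerators ki lam ⊆ K := hK ▸ subset_adjoin k _
  have hfinK : FiniteDimensional k K := by
    have := hfin
    exact .of_injective (inclusion (hK ▸ adjoin_zpowGenerators_le (le_iSup ki))).toLinearMap
      (RingHom.injective _)
  have hinsK : IsPurelyInseparable k K := (le_perfectClosure_iff k Ω K).mp <|
    hK ▸ adjoin_zpowGenerators_le fun i ↦ (le_perfectClosure_iff k Ω _).mpr (hins i)
  have halg : ∀ y ∈ zpowGenerators ki lam, IsAlgebraic k y := fun y hy ↦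
    (isAlgebraic_iff (x := ⟨y, hgen hy⟩)).mp (Algebra.IsAlgebraic.isAlgebraic _)
  refine ⟨⟨hfinK, hinsK⟩,
    fun x hx ↦ K.prod_mem fun i _ ↦ hgen (Set.mem_iUnion.mpr ⟨i, x i, (hx i).1, (hx i).2, rfl⟩),
    fun W hWK hWinv ↦ W.eq_bot_or_eq_of_mul_mem_of_le K hWK fun a ha ↦ ?_⟩
  exact mul_mem_of_mem_adjoin_of_isAlgebraic halg (mul_mem_of_mem_zpowGenerators hWinv) (hK ▸ ha)

/-- Let Ω/k be an extension of fields of characteristic p > 0 and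
k₁, …, kₙ intermediate fields, each finite purely inseparable over k.  Fix integers
λ₁, …, λₙ and let K be the subfield of Ω generated by k together with the sets
{x^{λᵢ} : x ∈ (kᵢ)ˣ}.  Then (i) K is finite purely inseparable over k;
(ii) the products x₁^{λ₁}⋯xₙ^{λₙ} lie in K, defining a k-linear action of
(k₁)ˣ × ⋯ × (kₙ)ˣ on K; (iii) the only invariant k-subspaces of K are {0} and K.
So K is an irreducible representation of the product group of dimension [K : k]. -/
theorem stmt_5 (p : ℕ) [Fact p.Prime] (k Ω : Type*) [Field k] [Field Ω] [Algebra k Ω]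
    [CharP k p] (n : ℕ) (ki : Fin n → IntermediateField k Ω)
    (hfin : ∀ i, FiniteDimensional k (ki i))
    (hins : ∀ i, IsPurelyInseparable k (ki i))
    (lam : Fin n → ℤ) (K : IntermediateField k Ω)
    (hK : K = IntermediateField.adjoin k
        (⋃ i, {y : Ω | ∃ x : Ω, x ∈ ki i ∧ x ≠ 0 ∧ y = x ^ lam i})) :
    (FiniteDimensional k K ∧ IsPurelyInseparable k K) ∧
    (∀ x : Fin n → Ω, (∀ i, x i ∈ ki i ∧ x i ≠ 0) → (∏ i, x i ^ lam i) ∈ K) ∧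
    (∀ W : Submodule k Ω, (∀ w ∈ W, w ∈ K) →
      (∀ x : Fin n → Ω, (∀ i, x i ∈ ki i ∧ x i ≠ 0) →
        ∀ w ∈ W, (∏ i, x i ^ lam i) * w ∈ W) →
      W = ⊥ ∨ (W : Set Ω) = (K : Set Ω)) :=
  stmt_5_general k Ω n ki hfin hins lam K hK
end

section
/- Let k'/k be a finite purely inseparable extension of fields of characteristic p > 0 and let G be a subgroup of (k')^× with the property that the only intermediate field E of k'/k with G ⊆ E is E = k' itself. Then for every integer λ, the only k-subspaces W of K = k'(λ) satisfying g^λ·W ⊆ W for all g ∈ G are {0} and K. (That is, the irreducible representation k'(λ) of (k')^× of weight λ remains irreducible upon restriction to G.) -/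
/-!
Let `F` be the field generated over `k` by the `λ`-th powers of the elements of `G`. A subspace
stable under `G` is stable under `F`, so it suffices to show `x ^ λ ∈ F` for all `x`: then
`K ≤ F`, and a nonzero `w ∈ W` gives `z = (z * w⁻¹) * w ∈ W` for every `z ∈ K`.
With `q` the exponential characteristic and `e` the exponent of `k'/k` (so `y ^ q ^ e ∈ k` for
all `y`), `d = gcd(λ, q ^ e)` is a power of `q`. For `g ∈ G` both `g ^ λ` and `g ^ q ^ e ∈ k`
lie in `F`, hence so does `g ^ d` by Bézout. Since `y ↦ y ^ d` is a ring endomorphism,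
`{y | y ^ d ∈ F}` is an intermediate field containing `G`, i.e. all of `k'`, and
`x ^ λ = (x ^ (λ / d)) ^ d ∈ F`.
-/

theorem zpow_gcd_mem {K S : Type*} [DivisionRing K] [SetLike S K] [SubfieldClass S K] {F : S}
    {x : K} {m n : ℤ} (hm : x ^ m ∈ F) (hn : x ^ n ∈ F) : x ^ (m.gcd n : ℤ) ∈ F := by
  rcases eq_or_ne x 0 with rfl | hx
  · rw [zero_zpow_eq]
    split_ifs
    exacts [one_mem F, zero_mem F]
  rw [Int.gcd_eq_gcd_ab, zpow_add₀ hx, zpow_mul, zpow_mul]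
  exact mul_mem (zpow_mem hm _) (zpow_mem hn _)

theorem ExpChar.exists_eq_pow_of_dvd_pow (R : Type*) [Semiring R] {q : ℕ} [ExpChar R q]
    {d e : ℕ} (h : d ∣ q ^ e) : ∃ b, d = q ^ b := by
  rcases ‹ExpChar R q› with _ | ⟨hq⟩
  · exact ⟨0, by simpa using h⟩
  · obtain ⟨b, -, rfl⟩ := (Nat.dvd_prime_pow hq).mp h
    exact ⟨b, rfl⟩

namespace IntermediateField

variable {K L : Type*} [Field K] [Field L] [Algebra K L]

def comapIterateFrobenius (F : IntermediateField K L) (q n : ℕ) [ExpChar L q] :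
    IntermediateField K L :=
  (F.toSubfield.comap (iterateFrobenius L q n)).toIntermediateField fun r ↦ by
    simp [iterateFrobenius_def, ← map_pow]

@[simp]
theorem mem_comapIterateFrobenius {F : IntermediateField K L} {q n : ℕ} [ExpChar L q] {y : L} :
    y ∈ F.comapIterateFrobenius q n ↔ y ^ q ^ n ∈ F :=
  Iff.rfl

end IntermediateField

open IntermediateField IsPurelyInseparable in
theorem IsPurelyInseparable.zpow_mem_adjoin_image_zpow {k L : Type*} [Field k] [Field L]
    [Algebra k L] [HasExponent k L] (q : ℕ) [ExpChar k q] {S : Set L} (hS : adjoin k S = ⊤)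
    (m : ℤ) (x : L) : x ^ m ∈ adjoin k ((· ^ m) '' S) := by
  have : ExpChar L q := expChar_of_injective_algebraMap (algebraMap k L).injective q
  set F := adjoin k ((· ^ m) '' S)
  set d := m.gcd ((q : ℤ) ^ exponent k L)
  obtain ⟨b, hb⟩ : ∃ b, d = q ^ b :=
    ExpChar.exists_eq_pow_of_dvd_pow k (Int.ofNat_dvd.mp (by simpa using Int.gcd_dvd_right ..))
  have hF : F.comapIterateFrobenius q b = ⊤ := by
    rw [eq_top_iff, ← hS, adjoin_le_iff]
    intro s hs
    have hsm : s ^ m ∈ F := subset_adjoin _ _ ⟨s, hs, rfl⟩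
    have hse : s ^ ((q : ℤ) ^ exponent k L) ∈ F := by
      obtain ⟨r, hr⟩ := exponent_def' k q s
      exact_mod_cast hr ▸ F.algebraMap_mem r
    simpa [← hb] using zpow_gcd_mem hsm hse
  obtain ⟨c, hc⟩ : (d : ℤ) ∣ m := Int.gcd_dvd_left ..
  have hxc : (x ^ c) ^ q ^ b ∈ F := mem_comapIterateFrobenius.mp (hF ▸ mem_top)
  rwa [hc, mul_comm, zpow_mul, hb, zpow_natCast]

namespace Submodule

variable {k L : Type*} [Field k] [Field L] [Algebra k L]

theorem mul_mem_of_mem_adjoin [Algebra.IsAlgebraic k L] {S : Set L} {W : Submodule k L}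
    (hW : ∀ s ∈ S, ∀ w ∈ W, s * w ∈ W) {z : L} (hz : z ∈ IntermediateField.adjoin k S) {w : L}
    (hw : w ∈ W) : z * w ∈ W := by
  rw [← IntermediateField.mem_toSubalgebra, IntermediateField.adjoin_toSubalgebra_of_isAlgebraic
    fun x _ ↦ Algebra.IsAlgebraic.isAlgebraic x] at hz
  induction hz using Algebra.adjoin_induction generalizing w with
  | mem s hs => exact hW s hs w hw
  | algebraMap r => rw [← Algebra.smul_def]; exact W.smul_mem r hw
  | add x y _ _ hx hy => rw [add_mul]; exact W.add_mem (hx hw) (hy hw)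
  | mul x y _ _ hx hy => rw [mul_assoc]; exact hx (hy hw)

theorem eq_bot_or_coe_eq_of_mul_mem {K : IntermediateField k L} {W : Submodule k L}
    (hWK : ∀ w ∈ W, w ∈ K) (hKW : ∀ z ∈ K, ∀ w ∈ W, z * w ∈ W) :
    W = ⊥ ∨ (W : Set L) = K := by
  refine or_iff_not_imp_left.mpr fun hW ↦ Set.Subset.antisymm hWK fun z hz ↦ ?_
  obtain ⟨w, hwW, hw0⟩ := W.ne_bot_iff.mp hW
  simpa [hw0] using hKW (z * w⁻¹) (mul_mem hz (inv_mem (hWK w hwW))) w hwW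

end Submodule

theorem stmt_9_general (k k' : Type*) [Field k] [Field k']
    [Algebra k k'] [IsPurelyInseparable k k'] [FiniteDimensional k k']
    (G : Subgroup k'ˣ)
    (hG : ∀ E : IntermediateField k k', (∀ g ∈ G, ((g : k'ˣ) : k') ∈ E) → E = ⊤)
    (lam : ℤ) (K : IntermediateField k k')
    (hK : K = IntermediateField.adjoin k {y : k' | ∃ x : k', x ≠ 0 ∧ y = x ^ lam}) :
    ∀ W : Submodule k k', (∀ w ∈ W, w ∈ K) →
      (∀ g ∈ G, ∀ w ∈ W, ((g : k'ˣ) : k') ^ lam * w ∈ W) →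
      W = ⊥ ∨ (W : Set k') = (K : Set k') := by
  intro W hWK hWG
  obtain ⟨q, _⟩ := ExpChar.exists k
  have hG_top : IntermediateField.adjoin k (Units.val '' (G : Set k'ˣ)) = ⊤ :=
    hG _ fun g hg ↦ IntermediateField.subset_adjoin _ _ ⟨g, hg, rfl⟩
  have hKF : K ≤ IntermediateField.adjoin k ((· ^ lam) '' (Units.val '' (G : Set k'ˣ))) := by
    rw [hK, IntermediateField.adjoin_le_iff]
    rintro _ ⟨x, -, rfl⟩
    exact IsPurelyInseparable.zpow_mem_adjoin_image_zpow q hG_top lam x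
  have hGW : ∀ y ∈ (· ^ lam) '' (Units.val '' (G : Set k'ˣ)), ∀ w ∈ W, y * w ∈ W := by
    rintro _ ⟨_, ⟨g, hg, rfl⟩, rfl⟩
    exact hWG g hg
  exact W.eq_bot_or_coe_eq_of_mul_mem hWK fun z hz w ↦ W.mul_mem_of_mem_adjoin hGW (hKF hz)

/-- Let k'/k be a finite purely inseparable extension of fields of
characteristic p > 0 and G a subgroup of (k')ˣ such that the only intermediate field
E of k'/k with G ⊆ E is k' itself.  Then for every λ ∈ ℤ the only k-subspaces W of
K = k'(λ) with g^λ·W ⊆ W for all g ∈ G are {0} and K. -/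
theorem stmt_9 (p : ℕ) [Fact p.Prime] (k k' : Type*) [Field k] [Field k']
    [Algebra k k'] [CharP k p] [IsPurelyInseparable k k'] [FiniteDimensional k k']
    (G : Subgroup k'ˣ)
    (hG : ∀ E : IntermediateField k k', (∀ g ∈ G, ((g : k'ˣ) : k') ∈ E) → E = ⊤)
    (lam : ℤ) (K : IntermediateField k k')
    (hK : K = IntermediateField.adjoin k {y : k' | ∃ x : k', x ≠ 0 ∧ y = x ^ lam}) :
    ∀ W : Submodule k k', (∀ w ∈ W, w ∈ K) →
      (∀ g ∈ G, ∀ w ∈ W, ((g : k'ˣ) : k') ^ lam * w ∈ W) →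
      W = ⊥ ∨ (W : Set k') = (K : Set k') :=
  stmt_9_general k k' G hG lam K hK
end

section
/- Let k'/k be a finite extension of fields and let G be a subset of (k')^×. Let E be the intersection of all k-subspaces V of k' such that 1 ∈ V and g·V ⊆ V for every g ∈ G. Then E is an intermediate field of k'/k (i.e. a subfield of k' containing k) and G ⊆ E. -/
/-!
The subspaces in question are exactly the `k`-subspaces containing `1` that are stable under
left multiplication by the `k`-subalgebra generated by `G`, so their intersection is that
subalgebra. A subalgebra of a finite (hence algebraic) field extension is a field, since the
inverse of an algebraic element is a polynomial in it.
-/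

section MulStable

variable {R A : Type*} [CommSemiring R] [Semiring A] [Algebra R A]

def Submodule.leftMulStabilizer (V : Submodule R A) : Subalgebra R A where
  carrier := {a | ∀ v ∈ V, a * v ∈ V}
  mul_mem' {a b} ha hb v hv := mul_assoc a b v ▸ ha _ (hb v hv)
  add_mem' {a b} ha hb v hv := add_mul a b v ▸ V.add_mem (ha v hv) (hb v hv)
  algebraMap_mem' r v hv := Algebra.smul_def r v ▸ V.smul_mem r hv

theorem sInf_one_mem_mul_mem_eq_adjoin (S : Set A) :
    sInf {V : Submodule R A | 1 ∈ V ∧ ∀ s ∈ S, ∀ v ∈ V, s * v ∈ V} =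
      Subalgebra.toSubmodule (Algebra.adjoin R S) := by
  refine le_antisymm (sInf_le ⟨(Algebra.adjoin R S).one_mem, fun s hs v hv ↦
    (Algebra.adjoin R S).mul_mem (Algebra.subset_adjoin hs) hv⟩) ?_
  intro a ha
  refine Submodule.mem_sInf.mpr fun V ⟨hV₁, hVS⟩ ↦ ?_
  have hstab : Algebra.adjoin R S ≤ V.leftMulStabilizer := Algebra.adjoin_le hVS
  simpa using hstab ha 1 hV₁

end MulStable

/-- Let k'/k be a finite extension of fields and G a subset of (k')ˣ.
Let E be the intersection of all k-subspaces V of k' with 1 ∈ V and g·V ⊆ V for all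
g ∈ G.  Then E is an intermediate field of k'/k and G ⊆ E. -/
theorem stmt_10 (k k' : Type*) [Field k] [Field k'] [Algebra k k']
    [FiniteDimensional k k'] (G : Set k'ˣ) (E : Submodule k k')
    (hE : E = sInf {V : Submodule k k' |
        (1 : k') ∈ V ∧ ∀ g ∈ G, ∀ v ∈ V, ((g : k'ˣ) : k') * v ∈ V}) :
    (∃ F : IntermediateField k k', (F : Set k') = (E : Set k')) ∧
    ∀ g ∈ G, ((g : k'ˣ) : k') ∈ E := by
  have hE' : E = Subalgebra.toSubmodule (Algebra.adjoin k ((↑) '' G)) := by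
    simp only [hE, ← sInf_one_mem_mul_mem_eq_adjoin, Set.forall_mem_image]
  subst hE'
  exact ⟨⟨Algebra.IsAlgebraic.toIntermediateField _, rfl⟩,
    fun g hg ↦ Algebra.subset_adjoin ⟨g, hg, rfl⟩⟩
end

section
/- Let k'/k be a finite purely inseparable extension of fields of characteristic p > 0 with exponent e (that is, x^{p^e} ∈ k for all x ∈ k'). Let A be a commutative k'-algebra with structure map σ : k' → A, and let ε : k' ⊗_k A → A be the A-algebra homomorphism determined by x ⊗ a ↦ σ(x)·a. Then every element u of the kernel of ε satisfies u^{p^e} = 0; in particular, the kernel of ε is a nil ideal, and every unit u of k' ⊗_k A with ε(u) = 1 is unipotent, i.e. u − 1 is nilpotent. -/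
open scoped TensorProduct

/-- Let k'/k be a finite purely inseparable extension of fields of
characteristic p > 0 with exponent e (x^{p^e} ∈ k for all x ∈ k').  Let A be a
commutative k'-algebra and ε : k' ⊗_k A → A (written A ⊗[k] k') the A-algebra
homomorphism determined by x ⊗ a ↦ σ(x)·a.  Then every u in the kernel of ε
satisfies u^{p^e} = 0 (the kernel is a nil ideal), and every unit u with ε(u) = 1
is unipotent, i.e. u − 1 is nilpotent. -/
theorem stmt_12 (p : ℕ) [Fact p.Prime] (k k' : Type*) [Field k] [Field k']
    [Algebra k k'] [CharP k p] [IsPurelyInseparable k k'] [FiniteDimensional k k']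
    (e : ℕ) (he : ∀ x : k', x ^ p ^ e ∈ (algebraMap k k').range)
    (A : Type*) [CommRing A] [Algebra k A] [Algebra k' A] [IsScalarTower k k' A]
    (ε : A ⊗[k] k' →+* A)
    (hε : ∀ (a : A) (x : k'), ε (a ⊗ₜ[k] x) = a * algebraMap k' A x) :
    (∀ u : A ⊗[k] k', ε u = 0 → u ^ p ^ e = 0) ∧
    (∀ u : (A ⊗[k] k')ˣ, ε (u : A ⊗[k] k') = 1 →
      IsNilpotent ((u : A ⊗[k] k') - 1)) := by
  rcases subsingleton_or_nontrivial (A ⊗[k] k') with h | h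
  · exact ⟨fun u _ => Subsingleton.elim _ _, fun u _ => ⟨1, by simpa using Subsingleton.elim _ _⟩⟩
  haveI : CharP (A ⊗[k] k') p :=
    charP_of_injective_algebraMap (algebraMap k (A ⊗[k] k')).injective p
  haveI : Nontrivial A := by
    rcases subsingleton_or_nontrivial A with hA | hA
    · have h10 : (1 : A ⊗[k] k') = 0 := by
        rw [Algebra.TensorProduct.one_def, Subsingleton.elim (1 : A) 0, TensorProduct.zero_tmul]
      exact absurd h10 one_ne_zero
    · exact hA
  haveI : CharP A p := charP_of_injective_algebraMap (algebraMap k A).injective p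
  have key : ∀ u : A ⊗[k] k', u ^ p ^ e = ((ε u) ^ p ^ e) ⊗ₜ[k] 1 := by
    intro u
    induction u using TensorProduct.induction_on with
    | zero =>
        have : (p : ℕ) ^ e ≠ 0 := pow_ne_zero _ (Fact.out : p.Prime).ne_zero
        simp [zero_pow this]
    | tmul a x =>
        obtain ⟨c, hc⟩ := he x
        rw [hε]
        have h1 : (a ⊗ₜ[k] x) ^ p ^ e = (a ^ p ^ e) ⊗ₜ[k] (x ^ p ^ e) :=
          Algebra.TensorProduct.tmul_pow a x (p ^ e)
        have h2 : (algebraMap k' A x) ^ p ^ e = algebraMap k A c := by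
          rw [← map_pow, ← hc, ← IsScalarTower.algebraMap_apply]
        rw [h1, ← hc, mul_pow, h2]
        have : (a ^ p ^ e) ⊗ₜ[k] (algebraMap k k' c) = (c • (a ^ p ^ e)) ⊗ₜ[k] (1 : k') := by
          rw [Algebra.algebraMap_eq_smul_one, TensorProduct.tmul_smul, TensorProduct.smul_tmul']
        rw [this, Algebra.smul_def, mul_comm]
    | add x y hx hy =>
        rw [add_pow_char_pow, hx, hy, map_add, add_pow_char_pow, TensorProduct.add_tmul]
  constructor
  · intro u hu
    have : (p : ℕ) ^ e ≠ 0 := pow_ne_zero _ (Fact.out : p.Prime).ne_zero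
    rw [key u, hu, zero_pow this, TensorProduct.zero_tmul]
  · intro u hu
    refine ⟨p ^ e, ?_⟩
    rw [sub_pow_char_pow, key ((u : A ⊗[k] k')), hu, one_pow, one_pow,
      Algebra.TensorProduct.one_def, sub_self]
end
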